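/- Let θ, ψ₁, ψ₂ be real numbers and let Ψ_θ be the ideal shared state. Then the CHSH success probability satisfies S(Ψ_θ) = 1/2 + (1/8)(sin θ (sin ψ₁ + sin ψ₂) + cos ψ₁ − cos ψ₂). -/

import Mathlib

open scoped ComplexInnerProductSpace

/-- Tensor product of two qubit vectors, realized in `EuclideanSpace ℂ (Fin 2 × Fin 2)`. -/
noncomputable def tensor2 (u v : EuclideanSpace ℂ (Fin 2)) :
    EuclideanSpace ℂ (Fin 2 × Fin 2) :=
  WithLp.toLp 2 (fun p => u p.1 * v p.2)

/-- Bob's first-qubit measurement vectors: for input `x = 0` the computational basis,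
for `x = 1` the Hadamard basis. -/
noncomputable def eVec (x a : Fin 2) : EuclideanSpace ℂ (Fin 2) :=
  if x = 0 then WithLp.toLp 2 (fun i => if i = a then 1 else 0)
  else WithLp.toLp 2 (fun i => ((Real.sqrt 2 : ℂ))⁻¹ * (if a = 1 ∧ i = 1 then -1 else 1))

/-- Second-qubit measurement vectors for angle `ψ`. -/
noncomputable def fVec (ψ : ℝ) (b : Fin 2) : EuclideanSpace ℂ (Fin 2) :=
  if b = 0 then WithLp.toLp 2 (fun i => if i = 0 then (Real.cos (ψ / 2) : ℂ) else (Real.sin (ψ / 2) : ℂ))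
  else WithLp.toLp 2 (fun i => if i = 0 then -(Real.sin (ψ / 2) : ℂ) else (Real.cos (ψ / 2) : ℂ))

/-- The CHSH success probability of a two-qubit state `Ψ` for measurement angles
`ψ₁` (input `y = 0`) and `ψ₂` (input `y = 1`). -/
noncomputable def chshS (ψ₁ ψ₂ : ℝ) (Ψ : EuclideanSpace ℂ (Fin 2 × Fin 2)) : ℝ :=
  (1 / 4) * ∑ x : Fin 2, ∑ y : Fin 2, ∑ a : Fin 2, ∑ b : Fin 2,
    if a + b = x * y then
      ‖⟪tensor2 (eVec x a) (fVec (if y = 0 then ψ₁ else ψ₂) b), Ψ⟫‖ ^ 2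
    else 0

/-- The ideal shared state
`(1/√2)(|0⟩|φ₀⟩ + |1⟩|φ₁⟩)`, `|φ₀⟩ = cos(θ/2)|0⟩ + sin(θ/2)|1⟩`,
`|φ₁⟩ = cos(θ/2)|0⟩ − sin(θ/2)|1⟩`. -/
noncomputable def idealState (θ : ℝ) : EuclideanSpace ℂ (Fin 2 × Fin 2) :=
  WithLp.toLp 2 (fun p => ((Real.sqrt 2 : ℂ))⁻¹ *
    (if p.2 = 0 then (Real.cos (θ / 2) : ℂ)
     else if p.1 = 0 then (Real.sin (θ / 2) : ℂ) else -(Real.sin (θ / 2) : ℂ)))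

/-!
Every measurement vector is, up to sign, a member of a rotated real basis
`(cos α, sin α), (-sin α, cos α)`: Bob's bases have `α = 0` and `α = π/4`, the second-qubit
bases `α = ψ/2`. For `Ψ_θ` measured in the rotated bases `α` and `β`, the outcomes agree with
probability `(1 + E)/2` and differ with probability `(1 - E)/2`, where
`E = cos 2α sin 2β sin θ + sin 2α cos 2β`. Thus `E = sin θ sin ψ` for `x = 0` and `E = cos ψ`
for `x = 1`, and averaging over the four input pairs gives the formula.
-/

open Real

noncomputable def rotatedBasis (α : ℝ) : Fin 2 → EuclideanSpace ℂ (Fin 2) :=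
  ![!₂[(cos α : ℂ), (sin α : ℂ)], !₂[((-sin α : ℝ) : ℂ), (cos α : ℂ)]]

theorem fVec_eq_rotatedBasis (ψ : ℝ) : fVec ψ = rotatedBasis (ψ / 2) := by
  funext b
  fin_cases b <;> ext i <;> fin_cases i <;> simp [fVec, rotatedBasis]

theorem eVec_zero_eq_rotatedBasis : eVec 0 = rotatedBasis 0 := by
  funext a
  fin_cases a <;> ext i <;> fin_cases i <;> simp [eVec, rotatedBasis]

theorem ofReal_inv_sqrt_two : ((√2 : ℝ) : ℂ)⁻¹ = (√2 : ℂ) / 2 := by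
  exact_mod_cast Real.sqrt_div_self.symm

theorem eVec_one_zero : eVec 1 0 = rotatedBasis (π / 4) 0 := by
  ext i; fin_cases i <;> simp [eVec, rotatedBasis, ofReal_inv_sqrt_two]

theorem eVec_one_one : eVec 1 1 = -rotatedBasis (π / 4) 1 := by
  ext i; fin_cases i <;> simp [eVec, rotatedBasis, ofReal_inv_sqrt_two]

theorem tensor2_neg_left (u v : EuclideanSpace ℂ (Fin 2)) : tensor2 (-u) v = -tensor2 u v := by
  ext p; simp [tensor2, neg_mul]

theorem inner_tensor2_idealState (θ p q r t : ℝ) :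
    ⟪tensor2 !₂[(p : ℂ), q] !₂[(r : ℂ), t], idealState θ⟫ =
      ((√2)⁻¹ * (p * (r * cos (θ / 2) + t * sin (θ / 2)) +
        q * (r * cos (θ / 2) - t * sin (θ / 2))) : ℝ) := by
  simp only [tensor2, idealState, PiLp.inner_apply, RCLike.inner_apply, Fintype.sum_prod_type,
    Fin.sum_univ_two]
  simp [Complex.conj_ofReal]
  ring

theorem norm_inner_tensor2_idealState_sq (θ p q r t : ℝ) :
    ‖⟪tensor2 !₂[(p : ℂ), q] !₂[(r : ℂ), t], idealState θ⟫‖ ^ 2 =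
      (p * (r * cos (θ / 2) + t * sin (θ / 2)) +
        q * (r * cos (θ / 2) - t * sin (θ / 2))) ^ 2 / 2 := by
  rw [inner_tensor2_idealState, Complex.norm_real, Real.norm_eq_abs, sq_abs, mul_pow, inv_pow,
    sq_sqrt zero_le_two]
  ring

noncomputable def parityProb (c : Fin 2) (E F : Fin 2 → EuclideanSpace ℂ (Fin 2))
    (Ψ : EuclideanSpace ℂ (Fin 2 × Fin 2)) : ℝ :=
  ∑ a : Fin 2, ∑ b : Fin 2, if a + b = c then ‖⟪tensor2 (E a) (F b), Ψ⟫‖ ^ 2 else 0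

/-- The expectation of `A_α ⊗ B_β` in `idealState θ`, for the `±1` observables `A_α`, `B_β`
diagonal in `rotatedBasis α`, `rotatedBasis β`. -/
noncomputable def correlator (θ α β : ℝ) : ℝ :=
  cos (2 * α) * sin (2 * β) * sin θ + sin (2 * α) * cos (2 * β)

theorem sin_eq_two_mul_sin_half_mul_cos_half (x : ℝ) :
    sin x = 2 * sin (x / 2) * cos (x / 2) := by
  rw [← sin_two_mul, mul_div_cancel₀ x two_ne_zero]

/- With `P = cos α + sin α` and `M = cos α - sin α`, the two amplitudes are
`(cos β cos(θ/2) P + sin β sin(θ/2) M)/√2` and `-(sin β cos(θ/2) M + cos β sin(θ/2) P)/√2`,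
so twice the left side is `(P² cos² β + M² sin² β)(cos² (θ/2) + sin² (θ/2)) + P M sin 2β sin θ`;
the coefficients below are what the three Pythagorean identities contribute. -/
theorem parityProb_zero_rotatedBasis_idealState (θ α β : ℝ) :
    parityProb 0 (rotatedBasis α) (rotatedBasis β) (idealState θ) =
      (1 + correlator θ α β) / 2 := by
  simp only [parityProb, Fin.sum_univ_two, rotatedBasis, Matrix.cons_val_zero,
    Matrix.cons_val_one, norm_inner_tensor2_idealState_sq]
  norm_num [show (1 + 1 : Fin 2) = 0 from rfl]
  rw [correlator, cos_two_mul, sin_two_mul, sin_two_mul, cos_two_mul,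
    sin_eq_two_mul_sin_half_mul_cos_half θ]
  set ca := cos α; set sa := sin α; set cb := cos β; set sb := sin β
  set c := cos (θ / 2); set s := sin (θ / 2)
  linear_combination (1 / 2 : ℝ) *
    (((ca + sa) ^ 2 * cb ^ 2 + (ca - sa) ^ 2 * sb ^ 2) * sin_sq_add_cos_sq (θ / 2)
      + (cb ^ 2 + sb ^ 2 - 4 * sb * cb * s * c) * sin_sq_add_cos_sq α
      + (1 - 2 * sa * ca) * sin_sq_add_cos_sq β)

theorem parityProb_one_rotatedBasis_idealState (θ α β : ℝ) :
    parityProb 1 (rotatedBasis α) (rotatedBasis β) (idealState θ) =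
      (1 - correlator θ α β) / 2 := by
  simp only [parityProb, Fin.sum_univ_two, rotatedBasis, Matrix.cons_val_zero,
    Matrix.cons_val_one, norm_inner_tensor2_idealState_sq]
  norm_num [show (1 + 1 : Fin 2) = 0 from rfl]
  rw [correlator, cos_two_mul, sin_two_mul, sin_two_mul, cos_two_mul,
    sin_eq_two_mul_sin_half_mul_cos_half θ]
  set ca := cos α; set sa := sin α; set cb := cos β; set sb := sin β
  set c := cos (θ / 2); set s := sin (θ / 2)
  linear_combination (1 / 2 : ℝ) *
    (((ca + sa) ^ 2 * sb ^ 2 + (ca - sa) ^ 2 * cb ^ 2) * sin_sq_add_cos_sq (θ / 2)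
      + (cb ^ 2 + sb ^ 2 + 4 * sb * cb * s * c) * sin_sq_add_cos_sq α
      + (1 + 2 * sa * ca) * sin_sq_add_cos_sq β)

theorem correlator_zero_left (θ β : ℝ) : correlator θ 0 β = sin (2 * β) * sin θ := by
  simp [correlator]

theorem correlator_pi_div_four_left (θ β : ℝ) : correlator θ (π / 4) β = cos (2 * β) := by
  simp [correlator, show 2 * (π / 4) = π / 2 by ring]

theorem parityProb_eVec_one (c : Fin 2) (F : Fin 2 → EuclideanSpace ℂ (Fin 2))
    (Ψ : EuclideanSpace ℂ (Fin 2 × Fin 2)) :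
    parityProb c (eVec 1) F Ψ = parityProb c (rotatedBasis (π / 4)) F Ψ := by
  simp only [parityProb, Fin.sum_univ_two, eVec_one_zero, eVec_one_one, tensor2_neg_left,
    inner_neg_left, norm_neg]

theorem chshS_eq_parityProb (ψ₁ ψ₂ : ℝ) (Ψ : EuclideanSpace ℂ (Fin 2 × Fin 2)) :
    chshS ψ₁ ψ₂ Ψ = (1 / 4) *
      (parityProb 0 (eVec 0) (fVec ψ₁) Ψ + parityProb 0 (eVec 0) (fVec ψ₂) Ψ
        + parityProb 0 (eVec 1) (fVec ψ₁) Ψ + parityProb 1 (eVec 1) (fVec ψ₂) Ψ) := by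
  simp only [chshS, parityProb, Fin.sum_univ_two]
  norm_num
  ring

theorem stmt_5 (θ ψ₁ ψ₂ : ℝ) :
    chshS ψ₁ ψ₂ (idealState θ) =
      1 / 2 + (1 / 8) * (Real.sin θ * (Real.sin ψ₁ + Real.sin ψ₂)
        + Real.cos ψ₁ - Real.cos ψ₂) := by
  rw [chshS_eq_parityProb, eVec_zero_eq_rotatedBasis, parityProb_eVec_one, parityProb_eVec_one,
    fVec_eq_rotatedBasis, fVec_eq_rotatedBasis]
  rw [parityProb_zero_rotatedBasis_idealState, parityProb_zero_rotatedBasis_idealState,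
    parityProb_zero_rotatedBasis_idealState, parityProb_one_rotatedBasis_idealState,
    correlator_zero_left, correlator_zero_left, correlator_pi_div_four_left,
    correlator_pi_div_four_left, mul_div_cancel₀ ψ₁ two_ne_zero, mul_div_cancel₀ ψ₂ two_ne_zero]
  ring
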